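/- Let κ ≥ 1, ℓ ≥ 1, and let y_0 < y_1 < … < y_{ℓ+1} be real numbers such that consecutive gap lengths satisfy (y_{k+1} − y_k)/(y_k − y_{k−1}) ≤ κ and (y_k − y_{k−1})/(y_{k+1} − y_k) ≤ κ for all k = 1, …, ℓ. Then for every u ∈ L²([y_0, y_{ℓ+1}]) it holds |u|²_{H^{1/2}([y_0, y_{ℓ+1}])} ≤ (1 + 2κ)^{ℓ−1} · Σ_{k=1}^{ℓ} |u|²_{H^{1/2}([y_{k−1}, y_{k+1}])}. -/

import Mathlib

/-!
Induct on `ℓ`, with `a = y₀`, `f = y_ℓ`, `g = y_{ℓ+1}`, `e = y_{ℓ+2}`. Splitting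
`(a, e] = (a, f] ∪ (f, g] ∪ (g, e]`, the seminorm on `(a, e]` is at most the seminorms on `(a, g]`
and on `(f, e]` plus twice the interaction `∫_{(a,f]} ∫_{(g,e]}` of the two non-adjacent pieces.
Averaging `|u x - u y|² ≤ 2 |u x - u z|² + 2 |u z - u y|²` over `z ∈ (f, g]`, which lies between
`x` and `y`, bounds this interaction by `(e - g) / (g - f) ≤ κ` times the seminorm on `(a, g]` plus
`min (f - a) (e - f) / (g - f)` times the seminorm on `(f, e]`. The latter ratio is at most `κ` for
`ℓ = 1` and at most `1 + κ` in general, and `3 + 2κ ≤ (1 + 2κ)²` closes the induction.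
-/

open Set MeasureTheory

/-- Squared Sobolev–Slobodeckij seminorm `|u|_{H^{1/2}(s)}²`. -/
noncomputable def sobSemiSq (u : ℝ → ℝ) (s : Set ℝ) : ENNReal :=
  ∫⁻ x in s, ∫⁻ y in s, ENNReal.ofReal ((u x - u y) ^ 2 / (x - y) ^ 2)

open scoped ENNReal

section Tonelli

variable {α β γ : Type*} [MeasurableSpace α] [MeasurableSpace β] [MeasurableSpace γ]
  {μ : Measure α} {ν : Measure β} {ρ : Measure γ} [SFinite ν] [SFinite ρ]

theorem setLIntegral_setLIntegral_setLIntegral_mul_le {k : α → γ → ℝ≥0∞}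
    {w : α → β → γ → ℝ≥0∞} (hk : Measurable fun p : α × γ => k p.1 p.2)
    (hw : Measurable fun p : α × β × γ => w p.1 p.2.1 p.2.2) {s : Set α} {t : Set β} {r : Set γ}
    (hs : MeasurableSet s) (hr : MeasurableSet r) {C : ℝ≥0∞}
    (hC : ∀ x ∈ s, ∀ z ∈ r, ∫⁻ y in t, w x y z ∂ν ≤ C) :
    ∫⁻ x in s, ∫⁻ y in t, ∫⁻ z in r, k x z * w x y z ∂ρ ∂ν ∂μ
      ≤ C * ∫⁻ x in s, ∫⁻ z in r, k x z ∂ρ ∂μ := by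
  calc ∫⁻ x in s, ∫⁻ y in t, ∫⁻ z in r, k x z * w x y z ∂ρ ∂ν ∂μ
      = ∫⁻ x in s, ∫⁻ z in r, k x z * ∫⁻ y in t, w x y z ∂ν ∂ρ ∂μ := by
        refine lintegral_congr fun x => ?_
        rw [lintegral_lintegral_swap (by fun_prop)]
        exact lintegral_congr fun z => lintegral_const_mul _ (by fun_prop)
    _ ≤ ∫⁻ x in s, ∫⁻ z in r, C * k x z ∂ρ ∂μ :=
        setLIntegral_mono' hs fun x hx => setLIntegral_mono' hr fun z hz => by
          rw [mul_comm C]; gcongr; exact hC x hx z hz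
    _ = C * ∫⁻ x in s, ∫⁻ z in r, k x z ∂ρ ∂μ := by
        rw [← lintegral_const_mul C hk.lintegral_prod_right]
        exact lintegral_congr fun x => lintegral_const_mul C (by fun_prop)

theorem lintegral_lintegral_lintegral_add {F G : α → β → γ → ℝ≥0∞}
    (hF : Measurable fun p : α × β × γ => F p.1 p.2.1 p.2.2) :
    ∫⁻ x, ∫⁻ y, ∫⁻ z, F x y z + G x y z ∂ρ ∂ν ∂μ
      = ∫⁻ x, ∫⁻ y, ∫⁻ z, F x y z ∂ρ ∂ν ∂μ + ∫⁻ x, ∫⁻ y, ∫⁻ z, G x y z ∂ρ ∂ν ∂μ := by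
  have hF₁ : Measurable fun x => ∫⁻ y, ∫⁻ z, F x y z ∂ρ ∂ν :=
    (Measurable.lintegral_prod_right' (f := fun q : (α × β) × γ => F q.1.1 q.1.2 q.2)
      (by fun_prop)).lintegral_prod_right'
  rw [← lintegral_add_left hF₁]
  refine lintegral_congr fun x => ?_
  rw [← lintegral_add_left (Measurable.lintegral_prod_right' (f := fun q : β × γ => F x q.1 q.2)
    (by fun_prop))]
  exact lintegral_congr fun y => lintegral_add_left (by fun_prop) _

end Tonelli

theorem sq_div_le_one {p q : ℝ} (h : |p| ≤ |q|) : (p / q) ^ 2 ≤ 1 := by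
  rw [div_pow, ← sq_abs p, ← sq_abs q]
  exact div_le_one_of_le₀ (pow_le_pow_left₀ (abs_nonneg _) h 2) (sq_nonneg _)

theorem sq_div_sq_mul_div_sq {p q r : ℝ} (h : q = 0 → p = 0) :
    p ^ 2 / q ^ 2 * (q / r) ^ 2 = p ^ 2 / r ^ 2 := by
  rcases eq_or_ne q 0 with hq | hq
  · simp [h hq, hq]
  · rw [div_pow]
    field_simp

theorem lintegral_Ioc_inv_sub_sq {a f w : ℝ} (haf : a ≤ f) (hfw : f < w) :
    ∫⁻ x in Ioc a f, ENNReal.ofReal ((w - x) ^ 2)⁻¹ = ENNReal.ofReal ((w - f)⁻¹ - (w - a)⁻¹) := by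
  have hcont : ContinuousOn (fun x => ((w - x) ^ 2)⁻¹) (Icc a f) :=
    ContinuousOn.inv₀ (by fun_prop) fun x hx => by nlinarith [hx.2]
  rw [← ofReal_integral_eq_lintegral_ofReal (hcont.integrableOn_Icc.mono_set Ioc_subset_Icc_self)
    (ae_of_all _ fun x => by positivity), ← intervalIntegral.integral_of_le haf]
  congr 1
  have hzpow : ∀ x, ((w - x) ^ 2)⁻¹ = (w - x) ^ (-2 : ℤ) := fun x => by
    rw [zpow_neg, zpow_ofNat]
  simp_rw [hzpow]
  rw [intervalIntegral.integral_comp_sub_left (fun t => t ^ (-2 : ℤ)) w, integral_zpow]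
  · norm_num [div_neg]
  · refine Or.inr ⟨by norm_num, fun h => ?_⟩
    rcases Set.mem_uIcc.mp h with h | h <;> linarith [h.1, h.2]

theorem setLIntegral_Ioc_sq_div_le {a f z y : ℝ} (haf : a ≤ f) (hfz : f < z) (hzy : z ≤ y) :
    ∫⁻ x in Ioc a f, ENNReal.ofReal (((y - z) / (y - x)) ^ 2)
      ≤ ENNReal.ofReal (min (f - a) (y - f)) := by
  rw [ENNReal.ofReal_min]
  refine le_min ?_ ?_
  · calc ∫⁻ x in Ioc a f, ENNReal.ofReal (((y - z) / (y - x)) ^ 2)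
        ≤ ∫⁻ _ in Ioc a f, 1 := setLIntegral_mono' measurableSet_Ioc fun x hx =>
          ENNReal.ofReal_le_one.mpr (sq_div_le_one (abs_sub_right_of_mem_uIcc
            (Icc_subset_uIcc ⟨by linarith [hx.2], hzy⟩)))
      _ = ENNReal.ofReal (f - a) := by rw [setLIntegral_one, Real.volume_Ioc]
  · have hfy : f < y := hfz.trans_le hzy
    calc ∫⁻ x in Ioc a f, ENNReal.ofReal (((y - z) / (y - x)) ^ 2)
        = ∫⁻ x in Ioc a f, ENNReal.ofReal ((y - z) ^ 2) * ENNReal.ofReal ((y - x) ^ 2)⁻¹ := by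
          simp_rw [← ENNReal.ofReal_mul (sq_nonneg _), div_pow, div_eq_mul_inv]
      _ = ENNReal.ofReal ((y - z) ^ 2 * ((y - f)⁻¹ - (y - a)⁻¹)) := by
          rw [lintegral_const_mul' _ _ ENNReal.ofReal_ne_top, lintegral_Ioc_inv_sub_sq haf hfy,
            ENNReal.ofReal_mul (sq_nonneg _)]
      _ ≤ ENNReal.ofReal ((y - f) ^ 2 * (y - f)⁻¹) := by
          refine ENNReal.ofReal_le_ofReal (mul_le_mul ?_ ?_ ?_ (sq_nonneg _))
          · exact pow_le_pow_left₀ (by linarith) (by linarith) 2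
          · exact sub_le_self _ (inv_nonneg.mpr (by linarith))
          · exact sub_nonneg.mpr (inv_anti₀ (by linarith) (by linarith))
      _ = ENNReal.ofReal (y - f) := by rw [sq, mul_inv_cancel_right₀ (by linarith)]

noncomputable def sobKernel (u : ℝ → ℝ) (x y : ℝ) : ℝ≥0∞ :=
  ENNReal.ofReal ((u x - u y) ^ 2 / (x - y) ^ 2)

noncomputable def sobCross (u : ℝ → ℝ) (s t : Set ℝ) : ℝ≥0∞ :=
  ∫⁻ x in s, ∫⁻ y in t, sobKernel u x y

section Kernel

variable {u : ℝ → ℝ}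

theorem sobSemiSq_eq_sobCross (u : ℝ → ℝ) (s : Set ℝ) : sobSemiSq u s = sobCross u s s := rfl

theorem sobKernel_comm (u : ℝ → ℝ) (x y : ℝ) : sobKernel u x y = sobKernel u y x := by
  rw [sobKernel, sobKernel, ← neg_sub (u x), ← neg_sub x, neg_sq, neg_sq]

@[fun_prop]
theorem measurable_sobKernel (hu : Measurable u) :
    Measurable fun p : ℝ × ℝ => sobKernel u p.1 p.2 :=
  Measurable.ennreal_ofReal (by fun_prop)

theorem sobKernel_le_add (u : ℝ → ℝ) (x y z : ℝ) :
    sobKernel u x y ≤ sobKernel u x z * ENNReal.ofReal (2 * ((z - x) / (y - x)) ^ 2)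
      + sobKernel u y z * ENNReal.ofReal (2 * ((y - z) / (y - x)) ^ 2) := by
  have key : (u x - u y) ^ 2 / (x - y) ^ 2 ≤
      (u x - u z) ^ 2 / (x - z) ^ 2 * (2 * ((z - x) / (y - x)) ^ 2)
        + (u y - u z) ^ 2 / (y - z) ^ 2 * (2 * ((y - z) / (y - x)) ^ 2) := by
    simp only [mul_left_comm _ (2 : ℝ)]
    rw [show (x - z) ^ 2 = (z - x) ^ 2 by ring,
      sq_div_sq_mul_div_sq (fun h => by rw [sub_eq_zero.mp h, sub_self]),
      sq_div_sq_mul_div_sq (fun h => by rw [sub_eq_zero.mp h, sub_self]), ← neg_sub x y, neg_sq,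
      mul_div_assoc', mul_div_assoc', ← add_div]
    gcongr
    nlinarith [sq_nonneg (u x + u y - 2 * u z)]
  calc sobKernel u x y ≤ _ := ENNReal.ofReal_le_ofReal key
    _ = _ := by
      rw [ENNReal.ofReal_add (by positivity) (by positivity),
        ENNReal.ofReal_mul (div_nonneg (sq_nonneg (u x - u z)) (sq_nonneg (x - z))),
        ENNReal.ofReal_mul (div_nonneg (sq_nonneg (u y - u z)) (sq_nonneg (y - z)))]
      rfl

theorem sobCross_comm (hu : Measurable u) (s t : Set ℝ) : sobCross u s t = sobCross u t s := by
  rw [sobCross, lintegral_lintegral_swap (by fun_prop)]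
  simp_rw [sobKernel_comm u _]
  rfl

theorem sobCross_union_left (u : ℝ → ℝ) {s t : Set ℝ} (r : Set ℝ) (ht : MeasurableSet t)
    (hst : Disjoint s t) : sobCross u (s ∪ t) r = sobCross u s r + sobCross u t r :=
  lintegral_union ht hst

theorem sobCross_union_right (hu : Measurable u) (r : Set ℝ) {s t : Set ℝ}
    (ht : MeasurableSet t) (hst : Disjoint s t) :
    sobCross u r (s ∪ t) = sobCross u r s + sobCross u r t := by
  rw [sobCross, sobCross, sobCross, ← lintegral_add_left (by fun_prop)]
  exact lintegral_congr fun x => lintegral_union ht hst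

theorem sobSemiSq_union (hu : Measurable u) {s t : Set ℝ} (ht : MeasurableSet t)
    (hst : Disjoint s t) :
    sobSemiSq u (s ∪ t) = sobSemiSq u s + 2 * sobCross u s t + sobSemiSq u t := by
  simp only [sobSemiSq_eq_sobCross]
  rw [sobCross_union_left u _ ht hst, sobCross_union_right hu _ ht hst,
    sobCross_union_right hu _ ht hst, sobCross_comm hu t s, two_mul]
  ring

theorem sobSemiSq_Ioc_union (hu : Measurable u) {a b c : ℝ} (hab : a ≤ b) (hbc : b ≤ c) :
    sobSemiSq u (Ioc a c)
      = sobSemiSq u (Ioc a b) + 2 * sobCross u (Ioc a b) (Ioc b c) + sobSemiSq u (Ioc b c) := by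
  rw [← Ioc_union_Ioc_eq_Ioc hab hbc]
  exact sobSemiSq_union hu measurableSet_Ioc (Ioc_disjoint_Ioc_of_le le_rfl)

end Kernel

section Estimates

variable {u : ℝ → ℝ}

theorem setLIntegral_sobKernel_left_le (hu : Measurable u) (a f g e : ℝ) :
    ∫⁻ x in Ioc a f, ∫⁻ y in Ioc g e, ∫⁻ z in Ioc f g,
        sobKernel u x z * ENNReal.ofReal (2 * ((z - x) / (y - x)) ^ 2)
      ≤ 2 * ENNReal.ofReal (e - g) * sobCross u (Ioc a f) (Ioc f g) := by
  refine setLIntegral_setLIntegral_setLIntegral_mul_le (by fun_prop) (by fun_prop)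
    measurableSet_Ioc measurableSet_Ioc fun x hx z hz => ?_
  calc ∫⁻ y in Ioc g e, ENNReal.ofReal (2 * ((z - x) / (y - x)) ^ 2)
      ≤ ∫⁻ _ in Ioc g e, 2 := setLIntegral_mono' measurableSet_Ioc fun y hy => by
        refine (ENNReal.ofReal_le_ofReal (mul_le_of_le_one_right zero_le_two ?_)).trans_eq
          (ENNReal.ofReal_ofNat 2)
        exact sq_div_le_one (abs_sub_left_of_mem_uIcc
          (Icc_subset_uIcc ⟨by linarith [hx.2, hz.1], by linarith [hz.2, hy.1]⟩))
    _ = 2 * ENNReal.ofReal (e - g) := by rw [setLIntegral_const, Real.volume_Ioc]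

theorem setLIntegral_sobKernel_right_le (hu : Measurable u) {a f : ℝ} (haf : a ≤ f) (g e : ℝ) :
    ∫⁻ x in Ioc a f, ∫⁻ y in Ioc g e, ∫⁻ z in Ioc f g,
        sobKernel u y z * ENNReal.ofReal (2 * ((y - z) / (y - x)) ^ 2)
      ≤ 2 * ENNReal.ofReal (min (f - a) (e - f)) * sobCross u (Ioc g e) (Ioc f g) := by
  have hmeas : Measurable fun q : (ℝ × ℝ) × ℝ =>
      sobKernel u q.1.2 q.2 * ENNReal.ofReal (2 * ((q.1.2 - q.2) / (q.1.2 - q.1.1)) ^ 2) := by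
    fun_prop
  rw [lintegral_lintegral_swap
    (hmeas.lintegral_prod_right' (ν := volume.restrict (Ioc f g))).aemeasurable]
  refine setLIntegral_setLIntegral_setLIntegral_mul_le
    (w := fun y x z => ENNReal.ofReal (2 * ((y - z) / (y - x)) ^ 2))
    (by fun_prop) (by fun_prop) measurableSet_Ioc measurableSet_Ioc fun y hy z hz => ?_
  simp only [ENNReal.ofReal_mul zero_le_two, ENNReal.ofReal_ofNat]
  rw [lintegral_const_mul' _ _ ENNReal.ofNat_ne_top]
  gcongr
  exact (setLIntegral_Ioc_sq_div_le haf hz.1 (hz.2.trans hy.1.le)).trans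
    (ENNReal.ofReal_le_ofReal (min_le_min_left _ (by linarith [hy.2])))

theorem ofReal_mul_sobCross_le (hu : Measurable u) {a f : ℝ} (haf : a ≤ f) (g e : ℝ) :
    ENNReal.ofReal (g - f) * sobCross u (Ioc a f) (Ioc g e)
      ≤ 2 * ENNReal.ofReal (e - g) * sobCross u (Ioc a f) (Ioc f g)
        + 2 * ENNReal.ofReal (min (f - a) (e - f)) * sobCross u (Ioc g e) (Ioc f g) := by
  calc ENNReal.ofReal (g - f) * sobCross u (Ioc a f) (Ioc g e)
      = ∫⁻ x in Ioc a f, ∫⁻ y in Ioc g e, ∫⁻ _ in Ioc f g, sobKernel u x y := by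
        rw [sobCross, ← lintegral_const_mul _ (by fun_prop)]
        refine lintegral_congr fun x => ?_
        rw [← lintegral_const_mul _ (by fun_prop)]
        refine lintegral_congr fun y => ?_
        rw [setLIntegral_const, Real.volume_Ioc, mul_comm]
    _ ≤ ∫⁻ x in Ioc a f, ∫⁻ y in Ioc g e, ∫⁻ z in Ioc f g,
          sobKernel u x z * ENNReal.ofReal (2 * ((z - x) / (y - x)) ^ 2)
            + sobKernel u y z * ENNReal.ofReal (2 * ((y - z) / (y - x)) ^ 2) :=
        lintegral_mono fun x => lintegral_mono fun y => lintegral_mono fun z =>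
          sobKernel_le_add u x y z
    _ = (∫⁻ x in Ioc a f, ∫⁻ y in Ioc g e, ∫⁻ z in Ioc f g,
          sobKernel u x z * ENNReal.ofReal (2 * ((z - x) / (y - x)) ^ 2))
        + ∫⁻ x in Ioc a f, ∫⁻ y in Ioc g e, ∫⁻ z in Ioc f g,
          sobKernel u y z * ENNReal.ofReal (2 * ((y - z) / (y - x)) ^ 2) :=
        lintegral_lintegral_lintegral_add (by fun_prop)
    _ ≤ _ := add_le_add (setLIntegral_sobKernel_left_le hu a f g e)
        (setLIntegral_sobKernel_right_le hu haf g e)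

theorem sobSemiSq_Ioc_le (hu : Measurable u) {a f g e κ c : ℝ} (haf : a ≤ f) (hfg : f < g)
    (hge : g ≤ e) (hκ : e - g ≤ κ * (g - f)) (hc : min (f - a) (e - f) ≤ c * (g - f)) :
    sobSemiSq u (Ioc a e) ≤ ENNReal.ofReal (1 + 2 * κ) * sobSemiSq u (Ioc a g)
      + ENNReal.ofReal (1 + 2 * c) * sobSemiSq u (Ioc f e) := by
  have hcross : sobCross u (Ioc a f) (Ioc g e)
      ≤ ENNReal.ofReal κ * (2 * sobCross u (Ioc a f) (Ioc f g))
        + ENNReal.ofReal c * (2 * sobCross u (Ioc f g) (Ioc g e)) := by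
    have hgf : 0 ≤ g - f := by linarith
    refine (ENNReal.mul_le_mul_iff_right (ENNReal.ofReal_pos.mpr (sub_pos.mpr hfg)).ne'
      ENNReal.ofReal_ne_top).mp ?_
    calc ENNReal.ofReal (g - f) * sobCross u (Ioc a f) (Ioc g e)
        ≤ 2 * ENNReal.ofReal (κ * (g - f)) * sobCross u (Ioc a f) (Ioc f g)
          + 2 * ENNReal.ofReal (c * (g - f)) * sobCross u (Ioc g e) (Ioc f g) := by
          refine (ofReal_mul_sobCross_le hu haf g e).trans ?_
          gcongr
      _ = _ := by
          rw [ENNReal.ofReal_mul' hgf, ENNReal.ofReal_mul' hgf, sobCross_comm hu (Ioc g e)]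
          ring
  have hL := sobSemiSq_Ioc_union hu haf hfg.le (u := u)
  have hR := sobSemiSq_Ioc_union hu hfg.le hge (u := u)
  have hFJ : 2 * sobCross u (Ioc a f) (Ioc f g) ≤ sobSemiSq u (Ioc a g) := by
    rw [hL]; exact le_add_right le_add_self
  have hJE : 2 * sobCross u (Ioc f g) (Ioc g e) ≤ sobSemiSq u (Ioc f e) := by
    rw [hR]; exact le_add_right le_add_self
  have hJEE :
      2 * sobCross u (Ioc f g) (Ioc g e) + sobSemiSq u (Ioc g e) ≤ sobSemiSq u (Ioc f e) := by
    rw [hR, add_assoc]; exact le_add_self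
  calc sobSemiSq u (Ioc a e)
      = sobSemiSq u (Ioc a g) + 2 * sobCross u (Ioc a f) (Ioc g e)
        + (2 * sobCross u (Ioc f g) (Ioc g e) + sobSemiSq u (Ioc g e)) := by
        rw [sobSemiSq_Ioc_union hu (haf.trans hfg.le) hge, ← Ioc_union_Ioc_eq_Ioc haf hfg.le,
          sobCross_union_left u _ measurableSet_Ioc (Ioc_disjoint_Ioc_of_le le_rfl)]
        ring
    _ ≤ sobSemiSq u (Ioc a g)
        + 2 * (ENNReal.ofReal κ * sobSemiSq u (Ioc a g) + ENNReal.ofReal c * sobSemiSq u (Ioc f e))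
        + sobSemiSq u (Ioc f e) := by
        gcongr
        exact hcross.trans (by gcongr)
    _ = _ := by
        have hgf : 0 < g - f := sub_pos.mpr hfg
        have hκ₀ : 0 ≤ κ := nonneg_of_mul_nonneg_left ((sub_nonneg.mpr hge).trans hκ) hgf
        have hc₀ : 0 ≤ c :=
          nonneg_of_mul_nonneg_left ((le_min (sub_nonneg.mpr haf) (by linarith)).trans hc) hgf
        rw [ENNReal.ofReal_add zero_le_one (by positivity), ENNReal.ofReal_mul zero_le_two,
          ENNReal.ofReal_add zero_le_one (by positivity), ENNReal.ofReal_mul zero_le_two]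
        simp only [ENNReal.ofReal_one, ENNReal.ofReal_ofNat]
        ring

end Estimates

theorem sobSemiSq_Ioc_le_sum {u : ℝ → ℝ} (hu : Measurable u) {κ : ℝ} (hκ : 1 ≤ κ) {ℓ : ℕ}
    (hℓ : 1 ≤ ℓ) {y : ℕ → ℝ} (hy : ∀ k ≤ ℓ, y k < y (k + 1))
    (hreg : ∀ k, 1 ≤ k → k ≤ ℓ →
      (y (k + 1) - y k) / (y k - y (k - 1)) ≤ κ ∧ (y k - y (k - 1)) / (y (k + 1) - y k) ≤ κ) :
    sobSemiSq u (Ioc (y 0) (y (ℓ + 1)))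
      ≤ ENNReal.ofReal ((1 + 2 * κ) ^ (ℓ - 1)) *
        ∑ k ∈ Finset.Icc 1 ℓ, sobSemiSq u (Ioc (y (k - 1)) (y (k + 1))) := by
  induction ℓ, hℓ using Nat.le_induction with
  | base => simp
  | succ ℓ hℓ ih =>
    have hmono : StrictMonoOn y (Iic (ℓ + 2)) :=
      strictMonoOn_Iic_of_lt_succ fun m hm => hy m (by omega)
    have haf : y 0 ≤ y ℓ := hmono.monotoneOn (by simp) (by simp) (Nat.zero_le ℓ)
    have hfg : y ℓ < y (ℓ + 1) := hy ℓ (by omega)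
    have hge : y (ℓ + 1) < y (ℓ + 2) := hy (ℓ + 1) le_rfl
    have hκ' : y (ℓ + 2) - y (ℓ + 1) ≤ κ * (y (ℓ + 1) - y ℓ) := by
      have := (hreg (ℓ + 1) (by omega) le_rfl).1
      rwa [Nat.add_sub_cancel, div_le_iff₀ (sub_pos.mpr hfg)] at this
    obtain ⟨c, hc, hcκ⟩ : ∃ c, min (y ℓ - y 0) (y (ℓ + 2) - y ℓ) ≤ c * (y (ℓ + 1) - y ℓ)
        ∧ 1 + 2 * c ≤ (1 + 2 * κ) ^ ℓ := by
      rcases hℓ.eq_or_lt with rfl | hℓ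
      · refine ⟨κ, min_le_left _ _ |>.trans ?_, by simp⟩
        have := (hreg 1 le_rfl (by omega)).2
        rwa [div_le_iff₀ (sub_pos.mpr hfg)] at this
      · refine ⟨1 + κ, min_le_right _ _ |>.trans (by linarith), ?_⟩
        calc 1 + 2 * (1 + κ) ≤ (1 + 2 * κ) ^ 2 := by nlinarith
          _ ≤ (1 + 2 * κ) ^ ℓ := pow_le_pow_right₀ (by linarith) hℓ
    calc sobSemiSq u (Ioc (y 0) (y (ℓ + 2)))
        ≤ ENNReal.ofReal (1 + 2 * κ) * sobSemiSq u (Ioc (y 0) (y (ℓ + 1)))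
          + ENNReal.ofReal (1 + 2 * c) * sobSemiSq u (Ioc (y ℓ) (y (ℓ + 2))) :=
        sobSemiSq_Ioc_le hu haf hfg hge.le hκ' hc
      _ ≤ ENNReal.ofReal (1 + 2 * κ) * (ENNReal.ofReal ((1 + 2 * κ) ^ (ℓ - 1)) *
            ∑ k ∈ Finset.Icc 1 ℓ, sobSemiSq u (Ioc (y (k - 1)) (y (k + 1))))
          + ENNReal.ofReal ((1 + 2 * κ) ^ ℓ) * sobSemiSq u (Ioc (y ℓ) (y (ℓ + 2))) := by
        gcongr
        exact ih (fun k hk => hy k (by omega)) fun k h₁ h₂ => hreg k h₁ (by omega)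
      _ = _ := by
        rw [← mul_assoc, ← ENNReal.ofReal_mul (by linarith), ← pow_succ', Nat.sub_add_cancel hℓ,
          Finset.sum_Icc_succ_top (by omega), mul_add]
        rfl

theorem sobSemiSq_congr_ae {u v : ℝ → ℝ} {s : Set ℝ} (h : u =ᵐ[volume.restrict s] v) :
    sobSemiSq u s = sobSemiSq v s :=
  lintegral_congr_ae <| h.mono fun x hx =>
    lintegral_congr_ae <| h.mono fun y hy => by simp only [hx, hy]

theorem sobSemiSq_congr_set (u : ℝ → ℝ) {s t : Set ℝ} (h : s =ᵐ[volume] t) :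
    sobSemiSq u s = sobSemiSq u t := by
  rw [sobSemiSq, setLIntegral_congr h]
  exact lintegral_congr fun x => setLIntegral_congr h

/-- Local-to-global seminorm estimate over `ℓ+1` consecutive shape-regular
elements (equation (3.10) in the proof of Lemma 3.5). -/
theorem seminorm_local_to_global
    (κ : ℝ) (hκ : 1 ≤ κ) (ℓ : ℕ) (hℓ : 1 ≤ ℓ) (y : ℕ → ℝ)
    (hy : ∀ k ≤ ℓ, y k < y (k + 1))
    (hreg : ∀ k, 1 ≤ k → k ≤ ℓ →
      (y (k + 1) - y k) / (y k - y (k - 1)) ≤ κ ∧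
      (y k - y (k - 1)) / (y (k + 1) - y k) ≤ κ)
    (u : ℝ → ℝ) (hu : MemLp u 2 (volume.restrict (Icc (y 0) (y (ℓ + 1))))) :
    sobSemiSq u (Icc (y 0) (y (ℓ + 1)))
      ≤ ENNReal.ofReal ((1 + 2 * κ) ^ (ℓ - 1)) *
        ∑ k ∈ Finset.Icc 1 ℓ, sobSemiSq u (Icc (y (k - 1)) (y (k + 1))) := by
  have hu' := hu.aestronglyMeasurable.aemeasurable
  have hIcc : ∀ p q, Icc p q ⊆ Icc (y 0) (y (ℓ + 1)) →
      sobSemiSq u (Icc p q) = sobSemiSq (hu'.mk u) (Ioc p q) := fun p q hpq =>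
    (sobSemiSq_congr_ae (ae_restrict_of_ae_restrict_of_subset hpq hu'.ae_eq_mk)).trans
      (sobSemiSq_congr_set _ Ioc_ae_eq_Icc.symm)
  have hmono : MonotoneOn y (Iic (ℓ + 1)) :=
    (strictMonoOn_Iic_of_lt_succ fun m hm => hy m (by omega)).monotoneOn
  rw [hIcc _ _ subset_rfl, Finset.sum_congr rfl fun k hk => hIcc _ _ <| by
    rw [Finset.mem_Icc] at hk
    exact Icc_subset_Icc (hmono (by simp) (by simp; omega) (Nat.zero_le _))
      (hmono (by simp; omega) (by simp) (by omega))]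
  exact sobSemiSq_Ioc_le_sum hu'.measurable_mk hκ hℓ hy hreg
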